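/- Let A* be a generalized Mahalanobis operator on H and B* a generalized Mahalanobis operator on V satisfying ⟨A* x, y⟩ = ⟨B* x, y⟩ for all x, y ∈ V. Then A* minimizes g over all generalized Mahalanobis operators on H if and only if B* minimizes g_V over all generalized Mahalanobis operators on V, and in this case g(A*) = g_V(B*). -/

import Mathlib

/-!
The objective only sees the quadratic forms `⟪A (z₁ - zⱼ), z₁ - zⱼ⟫` at differences of data
points, which lie in `V`; so it takes the same value at an operator `A` on `H` and at any `B` on
`V` inducing the same bilinear form on `V`. Every generalized Mahalanobis operator on `H` induces
one on `V` (its compression `P A ι`), and every one on `V` arises this way (act as `B` on `V` and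
as the identity on `Vᗮ`). Hence both problems range over the same set of objective values.
-/

open scoped RealInnerProductSpace

/-- A continuous linear operator on a real inner product space is a *generalized Mahalanobis
operator* if it is self-adjoint and positive definite. -/
def IsGenMahalanobis {H : Type*} [NormedAddCommGroup H] [InnerProductSpace ℝ H]
    (A : H →L[ℝ] H) : Prop :=
  (∀ x y : H, ⟪A x, y⟫ = ⟪x, A y⟫) ∧ ∀ x : H, x ≠ 0 → 0 < ⟪A x, x⟫

/-- A linear operator on a (subspace viewed as an) inner product space is a *generalized
Mahalanobis operator* if it is self-adjoint and positive definite. -/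
def IsGenMahalanobisLin {V : Type*} [NormedAddCommGroup V] [InnerProductSpace ℝ V]
    (B : V →ₗ[ℝ] V) : Prop :=
  (∀ x y : V, ⟪B x, y⟫ = ⟪x, B y⟫) ∧ ∀ x : V, x ≠ 0 → 0 < ⟪B x, x⟫

/-- The triplet-comparison empirical objective
`g(A) = Σ_i ℓ (sgn (‖z^i_1 - z^i_2‖_A - ‖z^i_1 - z^i_3‖_A)) (y i)`,
where `‖x‖_A = √⟪A x, x⟫`. -/
noncomputable def tripObj {H : Type*} [NormedAddCommGroup H] [InnerProductSpace ℝ H]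
    {n : ℕ} (ℓ : ℝ → ℝ → ℝ) (z₁ z₂ z₃ : Fin n → H) (y : Fin n → ℝ)
    (A : H → H) : ℝ :=
  ∑ i, ℓ (Real.sign (Real.sqrt ⟪A (z₁ i - z₂ i), z₁ i - z₂ i⟫ -
      Real.sqrt ⟪A (z₁ i - z₃ i), z₁ i - z₃ i⟫)) (y i)

namespace Submodule

variable {H : Type*} [NormedAddCommGroup H] [InnerProductSpace ℝ H] (V : Submodule ℝ H)

def IsCompression (A : H → H) (B : V →ₗ[ℝ] V) : Prop :=
  ∀ x y : V, ⟪A x, (y : H)⟫ = ⟪B x, y⟫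

theorem tripObj_eq_of_isCompression {n : ℕ} (ℓ : ℝ → ℝ → ℝ) (z₁ z₂ z₃ : Fin n → H)
    (y : Fin n → ℝ) (hz₁ : ∀ i, z₁ i ∈ V) (hz₂ : ∀ i, z₂ i ∈ V) (hz₃ : ∀ i, z₃ i ∈ V)
    {A : H → H} {B : V →ₗ[ℝ] V} (hAB : V.IsCompression A B) :
    tripObj ℓ z₁ z₂ z₃ y A =
      tripObj ℓ (fun i => (⟨z₁ i, hz₁ i⟩ : V)) (fun i => (⟨z₂ i, hz₂ i⟩ : V))
        (fun i => (⟨z₃ i, hz₃ i⟩ : V)) y B := by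
  refine Finset.sum_congr rfl fun i _ => ?_
  have h₁₂ := hAB (⟨z₁ i, hz₁ i⟩ - ⟨z₂ i, hz₂ i⟩) (⟨z₁ i, hz₁ i⟩ - ⟨z₂ i, hz₂ i⟩)
  have h₁₃ := hAB (⟨z₁ i, hz₁ i⟩ - ⟨z₃ i, hz₃ i⟩) (⟨z₁ i, hz₁ i⟩ - ⟨z₃ i, hz₃ i⟩)
  simp only [AddSubgroupClass.coe_sub] at h₁₂ h₁₃
  rw [h₁₂, h₁₃]

variable [V.HasOrthogonalProjection]

noncomputable def compression (A : H →L[ℝ] H) : V →ₗ[ℝ] V :=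
  (V.orthogonalProjectionOnto ∘L A ∘L V.subtypeL).toLinearMap

theorem inner_compression_apply (A : H →L[ℝ] H) (x y : V) :
    ⟪V.compression A x, y⟫ = ⟪A x, (y : H)⟫ :=
  inner_orthogonalProjectionOnto_eq_of_mem_right y (A x)

theorem isCompression_compression (A : H →L[ℝ] H) : V.IsCompression A (V.compression A) :=
  fun x y => (V.inner_compression_apply A x y).symm

theorem _root_.IsGenMahalanobis.compression {A : H →L[ℝ] H} (hA : IsGenMahalanobis A) :
    IsGenMahalanobisLin (V.compression A) := by
  refine ⟨fun x y => ?_, fun x hx => ?_⟩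
  · rw [V.inner_compression_apply, ← real_inner_comm x, V.inner_compression_apply, hA.1,
      real_inner_comm]
  · rw [V.inner_compression_apply]
    exact hA.2 x (by simpa using hx)

noncomputable def extendByIdentity (B : V →L[ℝ] V) : H →L[ℝ] H :=
  V.subtypeL ∘L B ∘L V.orthogonalProjectionOnto + Vᗮ.starProjection

theorem inner_extendByIdentity_apply (B : V →L[ℝ] V) (x u : H) :
    ⟪V.extendByIdentity B x, u⟫ =
      ⟪B (V.orthogonalProjectionOnto x), V.orthogonalProjectionOnto u⟫ +
        ⟪Vᗮ.starProjection x, u⟫ := by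
  rw [extendByIdentity, add_apply, inner_add_left]
  congr 1
  exact (inner_orthogonalProjectionOnto_eq_of_mem_left _ u).symm

theorem isCompression_extendByIdentity (B : V →L[ℝ] V) :
    V.IsCompression (V.extendByIdentity B) (B : V →ₗ[ℝ] V) := by
  intro x y
  rw [inner_extendByIdentity_apply, orthogonalProjectionOnto_mem_subspace_eq_self,
    orthogonalProjectionOnto_mem_subspace_eq_self,
    starProjection_orthogonal_apply_eq_zero x.2, inner_zero_left, add_zero]
  rfl

theorem isGenMahalanobis_extendByIdentity {B : V →L[ℝ] V}
    (hB : IsGenMahalanobisLin (B : V →ₗ[ℝ] V)) : IsGenMahalanobis (V.extendByIdentity B) := by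
  refine ⟨fun x u => ?_, fun x hx => ?_⟩
  · rw [inner_extendByIdentity_apply, ← real_inner_comm x, inner_extendByIdentity_apply,
      inner_starProjection_left_eq_right, real_inner_comm x]
    congr 1
    exact hB.1 _ _ |>.trans (real_inner_comm _ _)
  · rw [inner_extendByIdentity_apply]
    by_cases hPx : V.orthogonalProjectionOnto x = 0
    · have hxV : x ∈ Vᗮ := orthogonalProjectionOnto_eq_zero_iff.mp hPx
      rw [hPx, map_zero, inner_zero_left, zero_add, starProjection_eq_self_iff.mpr hxV]
      exact real_inner_self_pos.mpr hx
    · exact add_pos_of_pos_of_nonneg (hB.2 _ hPx) (re_inner_starProjection_nonneg Vᗮ x)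

theorem exists_isGenMahalanobis_isCompression [FiniteDimensional ℝ V] {B : V →ₗ[ℝ] V}
    (hB : IsGenMahalanobisLin B) : ∃ A : H →L[ℝ] H, IsGenMahalanobis A ∧ V.IsCompression A B :=
  ⟨V.extendByIdentity (LinearMap.toContinuousLinearMap B),
    V.isGenMahalanobis_extendByIdentity hB, V.isCompression_extendByIdentity _⟩

end Submodule

theorem representer_theorem_triplet_general
    {H : Type*} [NormedAddCommGroup H] [InnerProductSpace ℝ H]
    (V : Submodule ℝ H) [FiniteDimensional ℝ V]
    {n : ℕ} (ℓ : ℝ → ℝ → ℝ) (z₁ z₂ z₃ : Fin n → H) (y : Fin n → ℝ)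
    (hz₁ : ∀ i, z₁ i ∈ V) (hz₂ : ∀ i, z₂ i ∈ V) (hz₃ : ∀ i, z₃ i ∈ V)
    (Astar : H →L[ℝ] H)
    (Bstar : V →ₗ[ℝ] V)
    (hagree : ∀ x y' : V, ⟪Astar (x : H), (y' : H)⟫ = ⟪Bstar x, y'⟫) :
    ((∀ (A : H →L[ℝ] H), IsGenMahalanobis A →
        tripObj ℓ z₁ z₂ z₃ y ⇑Astar ≤ tripObj ℓ z₁ z₂ z₃ y ⇑A) ↔
      (∀ (B : V →ₗ[ℝ] V), IsGenMahalanobisLin B →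
        tripObj ℓ (fun i => (⟨z₁ i, hz₁ i⟩ : V)) (fun i => (⟨z₂ i, hz₂ i⟩ : V))
            (fun i => (⟨z₃ i, hz₃ i⟩ : V)) y ⇑Bstar ≤
          tripObj ℓ (fun i => (⟨z₁ i, hz₁ i⟩ : V)) (fun i => (⟨z₂ i, hz₂ i⟩ : V))
            (fun i => (⟨z₃ i, hz₃ i⟩ : V)) y ⇑B)) ∧
    ((∀ (A : H →L[ℝ] H), IsGenMahalanobis A →
        tripObj ℓ z₁ z₂ z₃ y ⇑Astar ≤ tripObj ℓ z₁ z₂ z₃ y ⇑A) →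
      tripObj ℓ z₁ z₂ z₃ y ⇑Astar =
        tripObj ℓ (fun i => (⟨z₁ i, hz₁ i⟩ : V)) (fun i => (⟨z₂ i, hz₂ i⟩ : V))
          (fun i => (⟨z₃ i, hz₃ i⟩ : V)) y ⇑Bstar) := by
  have : CompleteSpace V := FiniteDimensional.complete ℝ V
  have objective_eq {A : H → H} {B : V →ₗ[ℝ] V} (hAB : V.IsCompression A B) :=
    V.tripObj_eq_of_isCompression ℓ z₁ z₂ z₃ y hz₁ hz₂ hz₃ hAB
  have objective_star := objective_eq hagree
  refine ⟨⟨fun hmin B hB => ?_, fun hmin A hA => ?_⟩, fun _ => objective_star⟩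
  · obtain ⟨A, hA, hAB⟩ := V.exists_isGenMahalanobis_isCompression hB
    rw [← objective_star, ← objective_eq hAB]
    exact hmin A hA
  · rw [objective_star, objective_eq (V.isCompression_compression A)]
    exact hmin _ (hA.compression V)

/-- Representer theorem for the triplet task. Let `A*` (on `H`) and `B*`
(on `V`) be generalized Mahalanobis operators agreeing on `V`. Then `A*` minimizes the
triplet objective `g` over generalized Mahalanobis operators on `H` iff `B*` minimizes `g_V`
over generalized Mahalanobis operators on `V`, and in this case `g(A*) = g_V(B*)`. -/
theorem representer_theorem_triplet
    {H : Type*} [NormedAddCommGroup H] [InnerProductSpace ℝ H] [CompleteSpace H]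
    (V : Submodule ℝ H) [FiniteDimensional ℝ V]
    {n : ℕ} (ℓ : ℝ → ℝ → ℝ) (z₁ z₂ z₃ : Fin n → H) (y : Fin n → ℝ)
    (hz₁ : ∀ i, z₁ i ∈ V) (hz₂ : ∀ i, z₂ i ∈ V) (hz₃ : ∀ i, z₃ i ∈ V)
    (hy : ∀ i, y i = 1 ∨ y i = -1)
    (Astar : H →L[ℝ] H) (hAstar : IsGenMahalanobis Astar)
    (Bstar : V →ₗ[ℝ] V) (hBstar : IsGenMahalanobisLin Bstar)
    (hagree : ∀ x y' : V, ⟪Astar (x : H), (y' : H)⟫ = ⟪Bstar x, y'⟫) :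
    ((∀ (A : H →L[ℝ] H), IsGenMahalanobis A →
        tripObj ℓ z₁ z₂ z₃ y ⇑Astar ≤ tripObj ℓ z₁ z₂ z₃ y ⇑A) ↔
      (∀ (B : V →ₗ[ℝ] V), IsGenMahalanobisLin B →
        tripObj ℓ (fun i => (⟨z₁ i, hz₁ i⟩ : V)) (fun i => (⟨z₂ i, hz₂ i⟩ : V))
            (fun i => (⟨z₃ i, hz₃ i⟩ : V)) y ⇑Bstar ≤
          tripObj ℓ (fun i => (⟨z₁ i, hz₁ i⟩ : V)) (fun i => (⟨z₂ i, hz₂ i⟩ : V))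
            (fun i => (⟨z₃ i, hz₃ i⟩ : V)) y ⇑B)) ∧
    ((∀ (A : H →L[ℝ] H), IsGenMahalanobis A →
        tripObj ℓ z₁ z₂ z₃ y ⇑Astar ≤ tripObj ℓ z₁ z₂ z₃ y ⇑A) →
      tripObj ℓ z₁ z₂ z₃ y ⇑Astar =
        tripObj ℓ (fun i => (⟨z₁ i, hz₁ i⟩ : V)) (fun i => (⟨z₂ i, hz₂ i⟩ : V))
          (fun i => (⟨z₃ i, hz₃ i⟩ : V)) y ⇑Bstar) :=
  representer_theorem_triplet_general V ℓ z₁ z₂ z₃ y hz₁ hz₂ hz₃ Astar Bstar hagree
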